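/- Let ψ: X→[0,1] be measurable with ψ = 1 on O and ψ = 0 on X∖K, and suppose that for every n ∈ ℕ, P-almost surely on the event {σ > n}, E[1_K(x_{n+1}) ψ(x_{n+1}) | F_n] ≤ ψ(x_n). Set V := P(τ < τ' and τ < ∞) and Λ := lim_{n→∞} E[ζ_n], which exists since (E[ζ_n])_{n∈ℕ} is nonincreasing and nonnegative. Then: (a) Λ = V if and only if lim_{n→∞} E[1_{K∖O}(x_{(n−1)∧σ}) · 1_K(x_{n∧σ}) ψ(x_{n∧σ})] = 0; and (b) V = ψ(x) if and only if both ψ(x) = Λ (thriftiness) and Λ = V (equalization) hold. -/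

import Mathlib

open MeasureTheory Set Filter

/-- First hitting time of the set `S` by the sequence `x`, valued in `ℕ∞` (`⊤` if never hit). -/
noncomputable def hitTime {X : Type*} (S : Set X) (x : ℕ → X) : ℕ∞ :=
  sInf ((fun t : ℕ => (t : ℕ∞)) '' {t : ℕ | x t ∈ S})

/-- `σ = τ ∧ τ'`: the minimum of the hitting times of `O` and of `X ∖ K`. -/
noncomputable def stopMin {Ω X : Type*} (O K : Set X) (proc : ℕ → Ω → X) (ω : Ω) : ℕ∞ :=
  min (hitTime O fun t => proc t ω) (hitTime Kᶜ fun t => proc t ω)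

/-- `(n ∧ σ)(ω)` as a natural number. -/
noncomputable def stopIdx {Ω X : Type*} (O K : Set X) (proc : ℕ → Ω → X) (n : ℕ) (ω : Ω) : ℕ :=
  (min (n : ℕ∞) (stopMin O K proc ω)).toNat

/-- The process `ζ` associated with `ψ`: `ζ 0 = ψ x` and, for `n ≥ 1`,
`ζ_n = Σ_{t=0}^{(n−1)∧σ} 1_O(x_t) + 1_{K∖O}(x_{(n−1)∧σ}) ⬝ 1_K(x_{n∧σ}) ψ(x_{n∧σ})`. -/
noncomputable def zeta {Ω X : Type*} (O K : Set X) (proc : ℕ → Ω → X) (x : X)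
    (ψ : X → ℝ) : ℕ → Ω → ℝ
  | 0 => fun _ => ψ x
  | n + 1 => fun ω =>
      (∑ t ∈ Finset.range (stopIdx O K proc n ω + 1), O.indicator (1 : X → ℝ) (proc t ω)) +
        (K \ O).indicator (1 : X → ℝ) (proc (stopIdx O K proc n ω) ω) *
          K.indicator ψ (proc (stopIdx O K proc (n + 1) ω) ω)

/-- The second-term process `M` associated with `ψ`: `M 0 = ψ x` and, for `n ≥ 1`,
`M_n = 1_{K∖O}(x_{(n−1)∧σ}) ⬝ 1_K(x_{n∧σ}) ψ(x_{n∧σ})`. -/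
noncomputable def zetaM {Ω X : Type*} (O K : Set X) (proc : ℕ → Ω → X) (x : X)
    (ψ : X → ℝ) : ℕ → Ω → ℝ
  | 0 => fun _ => ψ x
  | n + 1 => fun ω =>
      (K \ O).indicator (1 : X → ℝ) (proc (stopIdx O K proc n ω) ω) *
        K.indicator ψ (proc (stopIdx O K proc (n + 1) ω) ω)

/-!
Because `ψ = 1` on `O` and `ψ = 0` off `K`, the process `ζ` is, path by path, the stopped process
`ψ(x_{n∧σ}) = 1_{τ ≤ n, τ < τ'} + 1_{n < σ} ψ(x_n)`, while
`ζ_{n+1} = 1_{τ ≤ n, τ < τ'} + M_{n+1}` with `M_{n+1} = 1_{n < σ} ψ(x_{n+1})`.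
As `{n < σ} ∈ F_n`, the conservation inequality gives `E[M_{n+1}] ≤ E[1_{n < σ} ψ(x_n)]`, that is
`E[ζ_{n+1}] ≤ E[ζ_n]`; so `E[ζ_n]` decreases to some `Λ ≤ ψ(x)`. Since `P(τ ≤ n, τ < τ')`
increases to `V`, `E[M_n] → Λ - V ≥ 0`, and both equivalences follow from `V ≤ Λ ≤ ψ(x)`.
-/

section Hitting

variable {X : Type*} {S : Set X} {y : ℕ → X}

lemma exists_hitTime_eq (h : hitTime S y ≠ ⊤) : ∃ t, y t ∈ S ∧ hitTime S y = t := by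
  have hne : ((fun t : ℕ => (t : ℕ∞)) '' {t | y t ∈ S}).Nonempty :=
    Set.nonempty_iff_ne_empty.2 fun he => h (by rw [hitTime, he, sInf_empty])
  obtain ⟨t, ht, heq⟩ := csInf_mem hne
  exact ⟨t, ht, heq.symm⟩

lemma hitTime_le_of_mem {t : ℕ} (h : y t ∈ S) : hitTime S y ≤ t :=
  sInf_le ⟨t, h, rfl⟩

lemma notMem_of_lt_hitTime {t : ℕ} (h : (t : ℕ∞) < hitTime S y) : y t ∉ S :=
  fun hS => (hitTime_le_of_mem hS).not_gt h

lemma mem_of_hitTime_eq {t : ℕ} (h : hitTime S y = t) : y t ∈ S := by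
  obtain ⟨s, hs, hst⟩ := exists_hitTime_eq (h ▸ ENat.natCast_ne_top t)
  rwa [← Nat.cast_injective (hst.symm.trans h)]

end Hitting

section Path

variable {Ω X : Type*} {O K : Set X} {proc : ℕ → Ω → X} {ω : Ω} {n : ℕ}

variable (O K proc) in
def reachedBy (n : ℕ) : Set Ω :=
  {ω | hitTime O (proc · ω) ≤ n ∧ hitTime O (proc · ω) < hitTime Kᶜ (proc · ω)}

variable (O K proc) in
def runningAt (n : ℕ) : Set Ω :=
  {ω | (n : ℕ∞) < stopMin O K proc ω}

lemma mem_diff_of_lt_stopMin {t : ℕ} (h : (t : ℕ∞) < stopMin O K proc ω) : proc t ω ∈ K \ O :=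
  ⟨not_not.1 (notMem_of_lt_hitTime (h.trans_le (min_le_right _ _))),
    notMem_of_lt_hitTime (h.trans_le (min_le_left _ _))⟩

lemma notMem_diff_of_stopMin_eq {s : ℕ} (h : stopMin O K proc ω = s) : proc s ω ∉ K \ O := by
  rcases min_choice (hitTime O (proc · ω)) (hitTime Kᶜ (proc · ω)) with hτ | hτ'
  · exact fun hs => hs.2 (mem_of_hitTime_eq (hτ.symm.trans h))
  · exact fun hs => mem_of_hitTime_eq (S := Kᶜ) (hτ'.symm.trans h) hs.1

lemma coe_stopIdx : (stopIdx O K proc n ω : ℕ∞) = min (n : ℕ∞) (stopMin O K proc ω) :=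
  ENat.natCast_toNat (ne_top_of_le_ne_top (ENat.natCast_ne_top n) (min_le_left _ _))

lemma stopIdx_eq_self (h : (n : ℕ∞) ≤ stopMin O K proc ω) : stopIdx O K proc n ω = n := by
  rw [stopIdx, min_eq_left h, ENat.toNat_natCast]

lemma stopIdx_succ_of_notMem_runningAt (h : ω ∉ runningAt O K proc n) :
    stopIdx O K proc (n + 1) ω = stopIdx O K proc n ω := by
  have h : stopMin O K proc ω ≤ n := not_lt.1 h
  apply Nat.cast_injective (R := ℕ∞)
  rw [coe_stopIdx, coe_stopIdx, min_eq_right h, min_eq_right (h.trans (by simp))]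

lemma proc_stopIdx_mem_diff_iff :
    proc (stopIdx O K proc n ω) ω ∈ K \ O ↔ ω ∈ runningAt O K proc n := by
  by_cases h : ω ∈ runningAt O K proc n
  · rw [stopIdx_eq_self (le_of_lt h)]
    exact iff_of_true (mem_diff_of_lt_stopMin h) h
  · refine iff_of_false (notMem_diff_of_stopMin_eq ?_) h
    rw [coe_stopIdx, min_eq_right (not_lt.1 h)]

lemma proc_stopIdx_mem_iff (hOK : O ⊆ K) :
    proc (stopIdx O K proc n ω) ω ∈ O ↔ ω ∈ reachedBy O K proc n := by
  by_cases h : ω ∈ runningAt O K proc n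
  · rw [stopIdx_eq_self (le_of_lt h)]
    exact iff_of_false (mem_diff_of_lt_stopMin h).2
      fun hA => hA.1.not_gt (h.trans_le (min_le_left _ _))
  · have hσ : stopMin O K proc ω = stopIdx O K proc n ω := by
      rw [coe_stopIdx, min_eq_right (not_lt.1 h)]
    have hsn : (stopIdx O K proc n ω : ℕ∞) ≤ n := coe_stopIdx.trans_le (min_le_left _ _)
    constructor
    · intro hO
      have hτ : hitTime O (proc · ω) = stopIdx O K proc n ω :=
        (hitTime_le_of_mem hO).antisymm (hσ ▸ min_le_left _ _)
      refine ⟨hτ ▸ hsn, hτ ▸ (hσ ▸ min_le_right _ _ : _ ≤ hitTime Kᶜ (proc · ω)).lt_of_ne ?_⟩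
      exact fun hτ' => mem_of_hitTime_eq (S := Kᶜ) hτ'.symm (hOK hO)
    · rintro ⟨-, hlt⟩
      exact mem_of_hitTime_eq ((min_eq_left hlt.le).symm.trans hσ)

lemma sum_indicator_range_stopIdx :
    ∑ t ∈ Finset.range (stopIdx O K proc n ω + 1), O.indicator (1 : X → ℝ) (proc t ω) =
      O.indicator 1 (proc (stopIdx O K proc n ω) ω) := by
  rw [Finset.sum_range_succ, Finset.sum_eq_zero, zero_add]
  intro t ht
  refine indicator_of_notMem (mem_diff_of_lt_stopMin (K := K) ?_).2 _
  calc (t : ℕ∞) < stopIdx O K proc n ω := by exact_mod_cast Finset.mem_range.1 ht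
    _ ≤ stopMin O K proc ω := coe_stopIdx.trans_le (min_le_right _ _)

lemma indicator_proc_stopIdx_diff :
    (K \ O).indicator (1 : X → ℝ) (proc (stopIdx O K proc n ω) ω) =
      (runningAt O K proc n).indicator 1 ω :=
  indicator_eq_indicator proc_stopIdx_mem_diff_iff rfl

lemma indicator_proc_stopIdx (hOK : O ⊆ K) :
    O.indicator (1 : X → ℝ) (proc (stopIdx O K proc n ω) ω) =
      (reachedBy O K proc n).indicator 1 ω :=
  indicator_eq_indicator (proc_stopIdx_mem_iff hOK) rfl

variable {ψ : X → ℝ}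

lemma zeta_succ (hOK : O ⊆ K) (x : X) :
    zeta O K proc x ψ (n + 1) ω =
      (reachedBy O K proc n).indicator 1 ω + zetaM O K proc x ψ (n + 1) ω := by
  simp only [zeta, zetaM]
  rw [sum_indicator_range_stopIdx, indicator_proc_stopIdx hOK]

lemma zetaM_succ (hψK : ∀ y ∉ K, ψ y = 0) (x : X) :
    zetaM O K proc x ψ (n + 1) =
      (runningAt O K proc n).indicator (fun ω => ψ (proc (n + 1) ω)) := by
  ext ω
  simp only [zetaM]
  rw [indicator_proc_stopIdx_diff, indicator_eq_self.2 (Function.support_subset_iff'.2 hψK)]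
  by_cases h : ω ∈ runningAt O K proc n
  · have hσ : ((n + 1 : ℕ) : ℕ∞) ≤ stopMin O K proc ω := by
      exact_mod_cast Order.add_one_le_of_lt (show (n : ℕ∞) < _ from h)
    rw [indicator_of_mem h, indicator_of_mem h, stopIdx_eq_self hσ, Pi.one_apply, one_mul]
  · rw [indicator_of_notMem h, indicator_of_notMem h, zero_mul]

lemma indicator_one_add_indicator_diff (hψO : ∀ y ∈ O, ψ y = 1) (hψK : ∀ y ∉ K, ψ y = 0) (z : X) :
    O.indicator 1 z + (K \ O).indicator ψ z = ψ z := by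
  by_cases hO : z ∈ O
  · rw [indicator_of_mem hO, indicator_of_notMem fun h => h.2 hO, hψO z hO, Pi.one_apply, add_zero]
  by_cases hK : z ∈ K
  · rw [indicator_of_notMem hO, indicator_of_mem (show z ∈ K \ O from ⟨hK, hO⟩), zero_add]
  · rw [indicator_of_notMem hO, indicator_of_notMem fun h => hK h.1, hψK z hK, add_zero]

lemma psi_proc_stopIdx (hOK : O ⊆ K) (hψO : ∀ y ∈ O, ψ y = 1) (hψK : ∀ y ∉ K, ψ y = 0) :
    ψ (proc (stopIdx O K proc n ω) ω) =
      (reachedBy O K proc n).indicator 1 ω +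
        (runningAt O K proc n).indicator (fun ω => ψ (proc n ω)) ω := by
  rw [← indicator_one_add_indicator_diff hψO hψK, indicator_proc_stopIdx hOK]
  by_cases h : ω ∈ runningAt O K proc n
  · rw [indicator_of_mem (proc_stopIdx_mem_diff_iff.2 h), indicator_of_mem h,
      stopIdx_eq_self h.le]
  · rw [indicator_of_notMem (mt proc_stopIdx_mem_diff_iff.1 h), indicator_of_notMem h]

lemma zeta_eq_psi_proc_stopIdx (hψO : ∀ y ∈ O, ψ y = 1) (hψK : ∀ y ∉ K, ψ y = 0) {x : X}
    (h0 : proc 0 ω = x) : ∀ n, zeta O K proc x ψ n ω = ψ (proc (stopIdx O K proc n ω) ω)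
  | 0 => by rw [stopIdx_eq_self (by simp), h0]; rfl
  | n + 1 => by
    simp only [zeta]
    rw [sum_indicator_range_stopIdx]
    by_cases h : ω ∈ runningAt O K proc n
    · rw [indicator_eq_self.2 (Function.support_subset_iff'.2 hψK),
        indicator_of_notMem (proc_stopIdx_mem_diff_iff.2 h).2,
        indicator_of_mem (proc_stopIdx_mem_diff_iff.2 h), zero_add, Pi.one_apply, one_mul]
    · rw [indicator_of_notMem (mt proc_stopIdx_mem_diff_iff.1 h), zero_mul,
        stopIdx_succ_of_notMem_runningAt h, ← indicator_one_add_indicator_diff hψO hψK,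
        indicator_of_notMem (mt proc_stopIdx_mem_diff_iff.1 h)]

lemma zeta_nonneg (hψ0 : ∀ y, 0 ≤ ψ y) (x : X) : ∀ n, 0 ≤ zeta O K proc x ψ n ω
  | 0 => hψ0 x
  | n + 1 => add_nonneg (Finset.sum_nonneg fun _ _ => indicator_nonneg (by simp) _)
      (mul_nonneg (indicator_nonneg (by simp) _) (indicator_nonneg (fun y _ => hψ0 y) _))

lemma zetaM_nonneg (hψ0 : ∀ y, 0 ≤ ψ y) (x : X) : ∀ n, 0 ≤ zetaM O K proc x ψ n ω
  | 0 => hψ0 x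
  | n + 1 => mul_nonneg (indicator_nonneg (by simp) _) (indicator_nonneg (fun y _ => hψ0 y) _)

variable (O K proc) in
lemma reachedBy_mono : Monotone (reachedBy O K proc) :=
  fun _ _ hmn _ hω => ⟨hω.1.trans (by exact_mod_cast hmn), hω.2⟩

variable (O K proc) in
lemma iUnion_reachedBy :
    ⋃ n, reachedBy O K proc n =
      {ω | hitTime O (proc · ω) < hitTime Kᶜ (proc · ω) ∧ hitTime O (proc · ω) < ⊤} := by
  ext ω
  simp only [reachedBy, mem_iUnion, mem_ofPred_eq]
  constructor
  · rintro ⟨n, hn, hlt⟩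
    exact ⟨hlt, hn.trans_lt (ENat.natCast_lt_top n)⟩
  · rintro ⟨hlt, htop⟩
    obtain ⟨n, hn⟩ := ENat.ne_top_iff_exists.1 htop.ne
    exact ⟨n, hn.ge, hlt⟩

lemma reachedBy_eq_biUnion (n : ℕ) :
    reachedBy O K proc n =
      ⋃ t ≤ n, {ω | hitTime O (proc · ω) ≤ t} \ {ω | hitTime Kᶜ (proc · ω) ≤ t} := by
  ext ω
  simp only [reachedBy, mem_iUnion, Set.mem_sdiff, mem_ofPred_eq, not_le]
  constructor
  · rintro ⟨hn, hlt⟩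
    obtain ⟨t, ht, htn⟩ := ENat.le_natCast_iff.1 hn
    exact ⟨t, htn, ht.le, by rwa [← ht]⟩
  · rintro ⟨t, htn, hτ, hτ'⟩
    exact ⟨hτ.trans (by exact_mod_cast htn), hτ.trans_lt hτ'⟩

lemma runningAt_eq_compl (n : ℕ) :
    runningAt O K proc n =
      ({ω | hitTime O (proc · ω) ≤ n} ∪ {ω | hitTime Kᶜ (proc · ω) ≤ n})ᶜ := by
  ext ω
  simp [runningAt, stopMin]

end Path

section Measure

variable {Ω X : Type*} {m0 : MeasurableSpace Ω} {P : Measure Ω}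
  {ℱ : Filtration ℕ m0} {O K : Set X} {proc : ℕ → Ω → X} {ψ : X → ℝ} {x : X} {n : ℕ}

lemma measurableSet_reachedBy
    (hτ : ∀ t : ℕ, MeasurableSet[ℱ t] {ω | hitTime O (proc · ω) ≤ t})
    (hτ' : ∀ t : ℕ, MeasurableSet[ℱ t] {ω | hitTime Kᶜ (proc · ω) ≤ t}) (n : ℕ) :
    MeasurableSet[ℱ n] (reachedBy O K proc n) := by
  rw [reachedBy_eq_biUnion]
  exact .biUnion (to_countable _) fun t ht => ℱ.mono ht _ ((hτ t).diff (hτ' t))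

lemma measurableSet_runningAt (hτ : MeasurableSet[ℱ n] {ω | hitTime O (proc · ω) ≤ n})
    (hτ' : MeasurableSet[ℱ n] {ω | hitTime Kᶜ (proc · ω) ≤ n}) :
    MeasurableSet[ℱ n] (runningAt O K proc n) := by
  rw [runningAt_eq_compl]
  exact (hτ.union hτ').compl

lemma integral_zeta [IsFiniteMeasure P] (hOK : O ⊆ K) (hψO : ∀ y ∈ O, ψ y = 1)
    (hψK : ∀ y ∉ K, ψ y = 0) (hx0 : ∀ᵐ ω ∂P, proc 0 ω = x)
    (hA : MeasurableSet (reachedBy O K proc n)) (hS : MeasurableSet (runningAt O K proc n))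
    (hψn : Integrable (fun ω => ψ (proc n ω)) P) :
    ∫ ω, zeta O K proc x ψ n ω ∂P =
      P.real (reachedBy O K proc n) +
        ∫ ω, (runningAt O K proc n).indicator (fun ω => ψ (proc n ω)) ω ∂P := by
  rw [integral_congr_ae (hx0.mono fun ω h0 =>
      (zeta_eq_psi_proc_stopIdx hψO hψK h0 n).trans (psi_proc_stopIdx hOK hψO hψK)),
    integral_add ?_ (hψn.indicator hS), integral_indicator_one hA]
  exact (integrable_const 1).indicator hA

lemma integral_zeta_succ [IsFiniteMeasure P] (hOK : O ⊆ K) (hψK : ∀ y ∉ K, ψ y = 0)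
    (hA : MeasurableSet (reachedBy O K proc n)) (hS : MeasurableSet (runningAt O K proc n))
    (hψn1 : Integrable (fun ω => ψ (proc (n + 1) ω)) P) :
    ∫ ω, zeta O K proc x ψ (n + 1) ω ∂P =
      P.real (reachedBy O K proc n) + ∫ ω, zetaM O K proc x ψ (n + 1) ω ∂P := by
  simp_rw [zeta_succ hOK]
  rw [integral_add ?_ (zetaM_succ hψK x ▸ hψn1.indicator hS), integral_indicator_one hA]
  exact (integrable_const 1).indicator hA

lemma integral_zetaM_succ_le [IsFiniteMeasure P] (hψK : ∀ y ∉ K, ψ y = 0)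
    (hS : MeasurableSet[ℱ n] (runningAt O K proc n))
    (hψn : Integrable (fun ω => ψ (proc n ω)) P)
    (hψn1 : Integrable (fun ω => ψ (proc (n + 1) ω)) P)
    (hcons : ∀ᵐ ω ∂P, (n : ℕ∞) < stopMin O K proc ω →
      (P[fun ω' => ψ (proc (n + 1) ω') | ℱ n]) ω ≤ ψ (proc n ω)) :
    ∫ ω, zetaM O K proc x ψ (n + 1) ω ∂P ≤
      ∫ ω, (runningAt O K proc n).indicator (fun ω => ψ (proc n ω)) ω ∂P := by
  rw [zetaM_succ hψK, integral_indicator (ℱ.le n _ hS), integral_indicator (ℱ.le n _ hS),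
    ← setIntegral_condExp (ℱ.le n) hψn1 hS]
  exact integral_mono_ae integrable_condExp.restrict hψn.restrict
    ((ae_restrict_iff' (ℱ.le n _ hS)).2 hcons)

variable (P O K proc) in
lemma tendsto_measureReal_reachedBy [IsFiniteMeasure P] :
    Tendsto (fun n => P.real (reachedBy O K proc n)) atTop
      (nhds (P.real {ω | hitTime O (proc · ω) < hitTime Kᶜ (proc · ω) ∧
        hitTime O (proc · ω) < ⊤})) := by
  rw [← iUnion_reachedBy]
  exact (ENNReal.tendsto_toReal (measure_ne_top P _)).comp
    (tendsto_measure_iUnion_atTop (reachedBy_mono O K proc))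

variable (x) in
lemma antitone_integral_zeta [IsFiniteMeasure P] (hOK : O ⊆ K) (hψO : ∀ y ∈ O, ψ y = 1)
    (hψK : ∀ y ∉ K, ψ y = 0) (hx0 : ∀ᵐ ω ∂P, proc 0 ω = x)
    (hA : ∀ n, MeasurableSet (reachedBy O K proc n))
    (hS : ∀ n, MeasurableSet[ℱ n] (runningAt O K proc n))
    (hψint : ∀ n, Integrable (fun ω => ψ (proc n ω)) P)
    (hcons : ∀ n : ℕ, ∀ᵐ ω ∂P, (n : ℕ∞) < stopMin O K proc ω →
      (P[fun ω' => ψ (proc (n + 1) ω') | ℱ n]) ω ≤ ψ (proc n ω)) :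
    Antitone fun n => ∫ ω, zeta O K proc x ψ n ω ∂P := by
  refine antitone_nat_of_succ_le fun n => ?_
  rw [integral_zeta_succ hOK hψK (hA n) (ℱ.le n _ (hS n)) (hψint (n + 1)),
    integral_zeta hOK hψO hψK hx0 (hA n) (ℱ.le n _ (hS n)) (hψint n)]
  exact add_le_add_right (integral_zetaM_succ_le hψK (hS n) (hψint n) (hψint (n + 1)) (hcons n)) _

lemma tendsto_integral_zetaM [IsFiniteMeasure P] (hOK : O ⊆ K) (hψK : ∀ y ∉ K, ψ y = 0)
    (hA : ∀ n, MeasurableSet (reachedBy O K proc n))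
    (hS : ∀ n, MeasurableSet (runningAt O K proc n))
    (hψint : ∀ n, Integrable (fun ω => ψ (proc n ω)) P) {Λ : ℝ}
    (hζ : Tendsto (fun n => ∫ ω, zeta O K proc x ψ n ω ∂P) atTop (nhds Λ)) :
    Tendsto (fun n => ∫ ω, zetaM O K proc x ψ n ω ∂P) atTop
      (nhds (Λ - P.real {ω | hitTime O (proc · ω) < hitTime Kᶜ (proc · ω) ∧
        hitTime O (proc · ω) < ⊤})) := by
  refine (tendsto_add_atTop_iff_nat 1).1 ?_
  have := ((tendsto_add_atTop_iff_nat 1).2 hζ).sub (tendsto_measureReal_reachedBy P O K proc)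
  simpa only [integral_zeta_succ hOK hψK (hA _) (hS _) (hψint _), add_sub_cancel_left]
    using this

end Measure

theorem stmt9_general {Ω X : Type*} {m0 : MeasurableSpace Ω} [MeasurableSpace X]
    (P : Measure Ω) [IsProbabilityMeasure P] (ℱ : Filtration ℕ m0)
    (O K : Set X) (hOK : O ⊂ K)
    (proc : ℕ → Ω → X) (hadapt : ∀ n, Measurable[ℱ n] (proc n))
    (x : X) (hx0 : ∀ᵐ ω ∂P, proc 0 ω = x)
    (hτstop : ∀ n : ℕ,
      MeasurableSet[ℱ n] {ω | hitTime O (fun t => proc t ω) ≤ (n : ℕ∞)})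
    (hτ'stop : ∀ n : ℕ,
      MeasurableSet[ℱ n] {ω | hitTime Kᶜ (fun t => proc t ω) ≤ (n : ℕ∞)})
    (ψ : X → ℝ) (hψmeas : Measurable ψ) (hψ0 : ∀ y, 0 ≤ ψ y) (hψ1 : ∀ y, ψ y ≤ 1)
    (hψO : ∀ y ∈ O, ψ y = 1) (hψK : ∀ y ∉ K, ψ y = 0)
    -- the conservation inequality: a.s. on `{σ > n}`,
    -- `E[1_K(x_{n+1}) ψ(x_{n+1}) | F_n] ≤ ψ(x_n)`
    (hcons : ∀ n : ℕ, ∀ᵐ ω ∂P, (n : ℕ∞) < stopMin O K proc ω →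
      (P[fun ω' => K.indicator ψ (proc (n + 1) ω') | ℱ n]) ω ≤ ψ (proc n ω)) :
    ∃ Λ : ℝ, Tendsto (fun n => ∫ ω, zeta O K proc x ψ n ω ∂P) atTop (nhds Λ) ∧
      -- (a) equalization iff the second term vanishes in the limit
      ((Λ = (P {ω | hitTime O (fun t => proc t ω) < hitTime Kᶜ (fun t => proc t ω) ∧
            hitTime O (fun t => proc t ω) < ⊤}).toReal) ↔
        Tendsto (fun n => ∫ ω, zetaM O K proc x ψ n ω ∂P) atTop (nhds 0)) ∧
      -- (b) optimality iff thrifty and equalizing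
      ((P {ω | hitTime O (fun t => proc t ω) < hitTime Kᶜ (fun t => proc t ω) ∧
            hitTime O (fun t => proc t ω) < ⊤}).toReal = ψ x ↔
        (ψ x = Λ ∧
          Λ = (P {ω | hitTime O (fun t => proc t ω) < hitTime Kᶜ (fun t => proc t ω) ∧
            hitTime O (fun t => proc t ω) < ⊤}).toReal)) := by
  rw [indicator_eq_self.2 (Function.support_subset_iff'.2 hψK)] at hcons
  have hA n := ℱ.le n _ (measurableSet_reachedBy hτstop hτ'stop n)
  have hS n := measurableSet_runningAt (hτstop n) (hτ'stop n)
  have hψint n : Integrable (fun ω => ψ (proc n ω)) P :=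
    .of_mem_Icc 0 1 (hψmeas.comp ((hadapt n).mono (ℱ.le n) le_rfl)).aemeasurable
      (ae_of_all _ fun ω => ⟨hψ0 _, hψ1 _⟩)
  have hanti := antitone_integral_zeta x hOK.subset hψO hψK hx0 hA hS hψint hcons
  have hbdd : BddBelow (range fun n => ∫ ω, zeta O K proc x ψ n ω ∂P) :=
    ⟨0, forall_mem_range.2 fun n => integral_nonneg fun ω => zeta_nonneg hψ0 x n⟩
  set Λ := ⨅ n, ∫ ω, zeta O K proc x ψ n ω ∂P
  set V := (P {ω | hitTime O (fun t => proc t ω) < hitTime Kᶜ (fun t => proc t ω) ∧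
    hitTime O (fun t => proc t ω) < ⊤}).toReal
  have hζ := tendsto_atTop_ciInf hanti hbdd
  have hM : Tendsto _ _ (nhds (Λ - V)) :=
    tendsto_integral_zetaM hOK.subset hψK hA (fun n => ℱ.le n _ (hS n)) hψint hζ
  have hVΛ := sub_nonneg.1 <|
    ge_of_tendsto' hM fun n => integral_nonneg fun ω => zetaM_nonneg hψ0 x n
  have hΛψ : Λ ≤ ψ x := (ciInf_le hbdd 0).trans_eq (by simp [zeta])
  refine ⟨Λ, hζ, ⟨fun h => ?_, fun h => ?_⟩, ⟨fun h => ⟨by linarith, by linarith⟩,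
    fun h => h.2.symm.trans h.1.symm⟩⟩
  · rwa [← h, sub_self] at hM
  · linarith [tendsto_nhds_unique hM h]

theorem stmt9 {Ω X : Type*} {m0 : MeasurableSpace Ω} [MeasurableSpace X]
    (P : Measure Ω) [IsProbabilityMeasure P] (ℱ : Filtration ℕ m0)
    (O K : Set X) (hmO : MeasurableSet O) (hmK : MeasurableSet K) (hOK : O ⊂ K)
    (proc : ℕ → Ω → X) (hadapt : ∀ n, Measurable[ℱ n] (proc n))
    (x : X) (hx0 : ∀ᵐ ω ∂P, proc 0 ω = x)
    (hτstop : ∀ n : ℕ,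
      MeasurableSet[ℱ n] {ω | hitTime O (fun t => proc t ω) ≤ (n : ℕ∞)})
    (hτ'stop : ∀ n : ℕ,
      MeasurableSet[ℱ n] {ω | hitTime Kᶜ (fun t => proc t ω) ≤ (n : ℕ∞)})
    (ψ : X → ℝ) (hψmeas : Measurable ψ) (hψ0 : ∀ y, 0 ≤ ψ y) (hψ1 : ∀ y, ψ y ≤ 1)
    (hψO : ∀ y ∈ O, ψ y = 1) (hψK : ∀ y ∉ K, ψ y = 0)
    -- the conservation inequality: a.s. on `{σ > n}`,
    -- `E[1_K(x_{n+1}) ψ(x_{n+1}) | F_n] ≤ ψ(x_n)`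
    (hcons : ∀ n : ℕ, ∀ᵐ ω ∂P, (n : ℕ∞) < stopMin O K proc ω →
      (P[fun ω' => K.indicator ψ (proc (n + 1) ω') | ℱ n]) ω ≤ ψ (proc n ω)) :
    ∃ Λ : ℝ, Tendsto (fun n => ∫ ω, zeta O K proc x ψ n ω ∂P) atTop (nhds Λ) ∧
      -- (a) equalization iff the second term vanishes in the limit
      ((Λ = (P {ω | hitTime O (fun t => proc t ω) < hitTime Kᶜ (fun t => proc t ω) ∧
            hitTime O (fun t => proc t ω) < ⊤}).toReal) ↔
        Tendsto (fun n => ∫ ω, zetaM O K proc x ψ n ω ∂P) atTop (nhds 0)) ∧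
      -- (b) optimality iff thrifty and equalizing
      ((P {ω | hitTime O (fun t => proc t ω) < hitTime Kᶜ (fun t => proc t ω) ∧
            hitTime O (fun t => proc t ω) < ⊤}).toReal = ψ x ↔
        (ψ x = Λ ∧
          Λ = (P {ω | hitTime O (fun t => proc t ω) < hitTime Kᶜ (fun t => proc t ω) ∧
            hitTime O (fun t => proc t ω) < ⊤}).toReal)) :=
  stmt9_general P ℱ O K hOK proc hadapt x hx0 hτstop hτ'stop ψ hψmeas hψ0 hψ1 hψO hψK hcons
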